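/- Let X be a finite-dimensional real inner product space and F a finite semilattice of linear subspaces of X (closed under intersection) with {0} ∈ F and X ∉ F. Let δ : X → ∏_{Y ∈ F} cl(X/Y) be the map x ↦ (π_{X/Y}(x))_{Y ∈ F}, where cl(X/Y) denotes the radial compactification of X/Y (a compact Hausdorff space) and π_{X/Y} the quotient map. Then δ is injective and a topological embedding of X onto its image, and the closure of δ(X) in the compact product ∏_{Y ∈ F} cl(X/Y) is a compactification of X (a compact Hausdorff space containing a dense homeomorphic copy of X). -/

import Mathlib

open Topology

theorem Submodule.isOpenEmbedding_mkQ_bot {R M : Type*} [Ring R] [AddCommGroup M] [Module R M]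
    [TopologicalSpace M] [ContinuousAdd M] : IsOpenEmbedding (⊥ : Submodule R M).mkQ :=
  have hmkQ := (⊥ : Submodule R M).isOpenQuotientMap_mkQ
  .of_continuous_injective_isOpenMap hmkQ.continuous
    (LinearMap.ker_eq_bot.mp (Submodule.ker_mkQ ⊥)) hmkQ.isOpenMap

theorem diagonal_map_embedding_compactification_general {X : Type*} [NormedAddCommGroup X]
    [InnerProductSpace ℝ X]
    (F : Finset (Submodule ℝ X))
    (hbot : (⊥ : Submodule ℝ X) ∈ F)
    (C : Submodule ℝ X → Type*) [∀ Y, TopologicalSpace (C Y)]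
    [∀ Y, CompactSpace (C Y)]
    (j : ∀ Y : Submodule ℝ X, (X ⧸ Y) → C Y)
    (hjemb : ∀ Y, Topology.IsEmbedding (j Y)) :
    Function.Injective (fun (x : X) (Y : F) => j Y.1 (Submodule.Quotient.mk x)) ∧
    Topology.IsEmbedding (fun (x : X) (Y : F) => j Y.1 (Submodule.Quotient.mk x)) ∧
    IsCompact (closure (Set.range
      (fun (x : X) (Y : F) => j Y.1 (Submodule.Quotient.mk x)))) := by
  have hcont : Continuous fun (x : X) (Y : F) => j Y.1 (Submodule.Quotient.mk x) :=
    continuous_pi fun Y => (hjemb Y.1).continuous.comp continuous_quot_mk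
  -- The coordinate at `⊥` alone already embeds `X`, since `X ⧸ ⊥ ≃ X`.
  have hemb : IsEmbedding fun (x : X) (Y : F) => j Y.1 (Submodule.Quotient.mk x) :=
    .of_comp hcont (continuous_apply (⟨⊥, hbot⟩ : F))
      ((hjemb ⊥).comp Submodule.isOpenEmbedding_mkQ_bot.isEmbedding)
  exact ⟨hemb.injective, hemb, isClosed_closure.isCompact⟩

/-- Let `F` be a finite semilattice of linear subspaces of a finite-dimensional real
inner product space `X`, with `{0} ∈ F` and `X ∉ F`. For each subspace `Y`, let
`C Y` be a radial compactification of `X/Y`: a compact Hausdorff space together with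
a topological embedding `j Y : X/Y → C Y` with open dense range. Then the diagonal
map `δ : X → ∏_{Y ∈ F} C Y`, `δ(x)(Y) = j Y (x + Y)`, is injective and a topological
embedding, and the closure of its range in the compact product is compact (a
compactification of `X` containing a dense homeomorphic copy of `X`). -/
theorem diagonal_map_embedding_compactification {X : Type*} [NormedAddCommGroup X]
    [InnerProductSpace ℝ X] [FiniteDimensional ℝ X]
    (F : Finset (Submodule ℝ X))
    (hmeet : ∀ A ∈ F, ∀ B ∈ F, A ⊓ B ∈ F)
    (hbot : (⊥ : Submodule ℝ X) ∈ F) (htop : (⊤ : Submodule ℝ X) ∉ F)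
    (C : Submodule ℝ X → Type*) [∀ Y, TopologicalSpace (C Y)]
    [∀ Y, CompactSpace (C Y)] [∀ Y, T2Space (C Y)]
    (j : ∀ Y : Submodule ℝ X, (X ⧸ Y) → C Y)
    (hjemb : ∀ Y, Topology.IsEmbedding (j Y))
    (hjopen : ∀ Y, IsOpen (Set.range (j Y)))
    (hjdense : ∀ Y, DenseRange (j Y)) :
    Function.Injective (fun (x : X) (Y : F) => j Y.1 (Submodule.Quotient.mk x)) ∧
    Topology.IsEmbedding (fun (x : X) (Y : F) => j Y.1 (Submodule.Quotient.mk x)) ∧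
    IsCompact (closure (Set.range
      (fun (x : X) (Y : F) => j Y.1 (Submodule.Quotient.mk x)))) :=
  diagonal_map_embedding_compactification_general F hbot C j hjemb
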